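/- Assume (G). Then for every ψ ∈ C([-h,0],ℝ₊) there exists a unique function y = y(·,ψ) : [0,h] → ℝ with y([0,h]) ⊆ B̄_b(x₂) that is differentiable and satisfies y'(s) = −g(y(s), ψ(−s)) for s ∈ [0,h] and y(0) = x₂. Moreover there exists a unique τ = τ(ψ) ∈ [(x₂−x₁)/K, (x₂−x₁)/ε] ⊆ (0,h) such that y(τ,ψ) = x₁. -/

import Mathlib

noncomputable section

/-- The point -s ∈ [-h, 0] for s ∈ [0, h]. -/
def negPt (h s : ℝ) (hs : s ∈ Set.Icc (0:ℝ) h) : Set.Icc (-h) (0:ℝ) :=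
  ⟨-s, Set.mem_Icc.mpr ⟨by have := (Set.mem_Icc.mp hs).2; linarith,
    by have := (Set.mem_Icc.mp hs).1; linarith⟩⟩

/-- y is a solution on [0,h] of y'(s) = -g(y(s), ψ(-s)), y(0) = x₂, with values in
B̄_b(x₂) = [x₂-b, x₂+b]. -/
def IsSolY (x₂ b h : ℝ) (g : ℝ → ℝ → ℝ) (ψ : C(Set.Icc (-h) (0:ℝ), ℝ))
    (y : ℝ → ℝ) : Prop :=
  y 0 = x₂ ∧ ∀ s : ℝ, ∀ hs : s ∈ Set.Icc (0:ℝ) h,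
    y s ∈ Set.Icc (x₂ - b) (x₂ + b) ∧
    HasDerivWithinAt y (-(g (y s) (ψ (negPt h s hs)))) (Set.Icc (0:ℝ) h) s

/-- Lemma 4.1. Under condition (G), for every nonnegative history ψ
there is a unique solution y of y'(s) = -g(y(s), ψ(-s)), y(0) = x₂ on [0, h] (h = b/K)
with values in B̄_b(x₂), and a unique τ ∈ [(x₂-x₁)/K, (x₂-x₁)/ε] ⊆ (0, h) with y(τ) = x₁. -/
theorem statement17 (x₁ x₂ b K ε : ℝ) (hx : x₁ < x₂) (hb : 0 < b)
    (hε : 0 < ε) (hεK : ε < K) (hgap : x₂ - x₁ < b / K * ε)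
    (g Dg : ℝ → ℝ → ℝ)
    -- (G₁)
    (hG1 : ∀ z : ℝ, 0 ≤ z → ∃ δ : ℝ, 0 < δ ∧ ∃ L : ℝ,
      ∀ y ∈ Set.Icc (x₂ - b) (x₂ + b), ∀ z₁ z₂ : ℝ, 0 ≤ z₁ → 0 ≤ z₂ →
        |z₁ - z| ≤ δ → |z₂ - z| ≤ δ → |g y z₁ - g y z₂| ≤ L * |z₁ - z₂|)
    -- (G₂): partial differentiability in the first argument, D₁g Lipschitz and bounded
    (hG2d : ∀ z : ℝ, 0 ≤ z → ∀ y ∈ Set.Icc (x₂ - b) (x₂ + b),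
      HasDerivWithinAt (fun y' => g y' z) (Dg y z) (Set.Icc (x₂ - b) (x₂ + b)) y)
    (hG2lip : ∃ LD : ℝ, ∀ y ∈ Set.Icc (x₂ - b) (x₂ + b), ∀ y' ∈ Set.Icc (x₂ - b) (x₂ + b),
      ∀ z z' : ℝ, 0 ≤ z → 0 ≤ z' → |Dg y z - Dg y' z'| ≤ LD * (|y - y'| + |z - z'|))
    (hG2bd : ∃ M : ℝ, M < K / b ∧
      ∀ y ∈ Set.Icc (x₂ - b) (x₂ + b), ∀ z : ℝ, 0 ≤ z → |Dg y z| ≤ M)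
    -- (G₃)
    (hG3 : ∀ y ∈ Set.Icc (x₂ - b) (x₂ + b), ∀ z : ℝ, 0 ≤ z → ε ≤ g y z ∧ g y z ≤ K)
    (ψ : C(Set.Icc (-(b / K)) (0:ℝ), ℝ)) (hψ : ∀ θ, 0 ≤ ψ θ) :
    ∃ y : ℝ → ℝ, IsSolY x₂ b (b / K) g ψ y ∧
      (∀ y' : ℝ → ℝ, IsSolY x₂ b (b / K) g ψ y' →
        ∀ s ∈ Set.Icc (0:ℝ) (b / K), y' s = y s) ∧
      0 < (x₂ - x₁) / K ∧ (x₂ - x₁) / ε < b / K ∧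
      ∃ τ : ℝ, τ ∈ Set.Icc ((x₂ - x₁) / K) ((x₂ - x₁) / ε) ∧ y τ = x₁ ∧
        ∀ τ' ∈ Set.Icc (0:ℝ) (b / K), y τ' = x₁ → τ' = τ := by
  classical
  obtain ⟨M, hMK, hM⟩ := hG2bd
  have hK : 0 < K := hε.trans hεK
  have hh : 0 < b / K := div_pos hb hK
  have hKh : K * (b / K) = b := by field_simp
  have hx₂mem : x₂ ∈ Set.Icc (x₂ - b) (x₂ + b) := by constructor <;> linarith
  have hM0 : 0 ≤ M := le_trans (abs_nonneg _) (hM x₂ hx₂mem 0 le_rfl)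
  -- clamping function
  set clamp : ℝ → ℝ := fun x => max (x₂ - b) (min x (x₂ + b)) with hclamp_def
  have hclamp_mem : ∀ x, clamp x ∈ Set.Icc (x₂ - b) (x₂ + b) := by
    intro x
    exact ⟨le_max_left _ _, max_le (by linarith) (min_le_right _ _)⟩
  have hclamp_id : ∀ x ∈ Set.Icc (x₂ - b) (x₂ + b), clamp x = x := by
    intro x hx'
    simp only [hclamp_def]
    rw [min_eq_left hx'.2, max_eq_right hx'.1]
  have hclamp_contr : ∀ x x' : ℝ, |clamp x - clamp x'| ≤ |x - x'| := by
    intro x x'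
    simp only [hclamp_def]
    rw [max_comm (x₂ - b) (min x (x₂ + b)), max_comm (x₂ - b) (min x' (x₂ + b))]
    refine le_trans (abs_max_sub_max_le_abs _ _ _) ?_
    refine le_trans (abs_min_sub_min_le_max x (x₂ + b) x' (x₂ + b)) ?_
    simp [abs_nonneg]
  -- the history as a function of forward time
  set zfun : ℝ → ℝ := fun t => ψ (Set.projIcc (-(b / K)) 0 (neg_nonpos.mpr hh.le) (-t))
    with hz_def
  have hz_cont : Continuous zfun :=
    ψ.continuous.comp (continuous_projIcc.comp continuous_neg)
  have hz_nonneg : ∀ t, 0 ≤ zfun t := by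
    intro t
    simp only [hz_def]
    exact hψ _
  have hz_eq : ∀ s : ℝ, ∀ hs : s ∈ Set.Icc (0:ℝ) (b / K), zfun s = ψ (negPt (b / K) s hs) := by
    intro s hs
    have hmem : -s ∈ Set.Icc (-(b / K)) (0:ℝ) := ⟨by linarith [hs.2], by linarith [hs.1]⟩
    simp only [hz_def]
    congr 1
    exact Set.projIcc_of_mem _ hmem
  -- the vector field
  set v : ℝ → ℝ → ℝ := fun t x => -(g (clamp x) (zfun t)) with hv_def
  -- Lipschitz in x
  have hglip : ∀ z : ℝ, 0 ≤ z → ∀ y ∈ Set.Icc (x₂ - b) (x₂ + b),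
      ∀ y' ∈ Set.Icc (x₂ - b) (x₂ + b), |g y z - g y' z| ≤ M * |y - y'| := by
    intro z hz y hy y' hy'
    have := (convex_Icc (x₂ - b) (x₂ + b)).norm_image_sub_le_of_norm_hasDerivWithin_le
      (f := fun w => g w z) (f' := fun w => Dg w z)
      (fun w hw => hG2d z hz w hw)
      (fun w hw => by rw [Real.norm_eq_abs]; exact hM w hw z hz) hy' hy
    simpa [Real.norm_eq_abs] using this
  have hvlip : ∀ t : ℝ, LipschitzWith ⟨M, hM0⟩ (v t) := by
    intro t
    apply LipschitzWith.of_dist_le_mul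
    intro x x'
    simp only [hv_def, Real.dist_eq, neg_sub_neg]
    calc |g (clamp x') (zfun t) - g (clamp x) (zfun t)|
        ≤ M * |clamp x' - clamp x| :=
          hglip _ (hz_nonneg t) _ (hclamp_mem x') _ (hclamp_mem x)
      _ ≤ M * |x' - x| := by
          exact mul_le_mul_of_nonneg_left (hclamp_contr x' x) hM0
      _ = M * |x - x'| := by rw [abs_sub_comm x' x]
      _ = (⟨M, hM0⟩ : NNReal) * |x - x'| := rfl
  -- continuity in t
  have hgy_cont : ∀ y ∈ Set.Icc (x₂ - b) (x₂ + b),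
      ContinuousOn (fun z => g y z) (Set.Ici (0:ℝ)) := by
    intro y hy z₀ hz₀
    obtain ⟨δ, hδ, L, hL⟩ := hG1 z₀ hz₀
    rw [Metric.continuousWithinAt_iff]
    intro ε' hε'
    refine ⟨min δ (ε' / (|L| + 1)), by positivity, fun z hz hdist => ?_⟩
    have hzd : |z - z₀| ≤ δ := by
      rw [Real.dist_eq] at hdist
      exact le_of_lt (lt_of_lt_of_le hdist (min_le_left _ _))
    have hbound : |g y z - g y z₀| ≤ L * |z - z₀| :=
      hL y hy z z₀ hz hz₀ hzd (by simpa using hδ.le)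
    have hzd2 : |z - z₀| < ε' / (|L| + 1) := by
      rw [Real.dist_eq] at hdist
      exact lt_of_lt_of_le hdist (min_le_right _ _)
    have hL1 : (0:ℝ) < |L| + 1 := by positivity
    rw [Real.dist_eq]
    calc |g y z - g y z₀| ≤ L * |z - z₀| := hbound
      _ ≤ (|L| + 1) * |z - z₀| :=
          mul_le_mul_of_nonneg_right (by linarith [le_abs_self L]) (abs_nonneg _)
      _ < (|L| + 1) * (ε' / (|L| + 1)) := by
          exact mul_lt_mul_of_pos_left hzd2 hL1
      _ = ε' := by field_simp
  have hvcont : ∀ x : ℝ, ContinuousOn (fun t => v t x) (Set.Icc (0:ℝ) (b / K)) := by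
    intro x
    simp only [hv_def]
    apply ContinuousOn.neg
    exact (hgy_cont (clamp x) (hclamp_mem x)).comp hz_cont.continuousOn
      (fun t _ => hz_nonneg t)
  -- norm bound
  have hvbd : ∀ t x : ℝ, ‖v t x‖ ≤ K := by
    intro t x
    have hg3 := hG3 (clamp x) (hclamp_mem x) (zfun t) (hz_nonneg t)
    rw [Real.norm_eq_abs, hv_def]
    rw [abs_neg, abs_le]
    exact ⟨by linarith, hg3.2⟩
  -- Picard-Lindelöf
  have hpl : IsPicardLindelof v (tmin := 0) (tmax := b / K) ⟨0, ⟨le_rfl, hh.le⟩⟩ x₂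
      ⟨b, hb.le⟩ 0 ⟨K, hK.le⟩ ⟨M, hM0⟩ :=
    { lipschitzOnWith := fun t _ => (hvlip t).lipschitzOnWith
      continuousOn := fun x _ => hvcont x
      norm_le := fun t _ x _ => hvbd t x
      mul_max_le := by
        show K * max (b / K - 0) (0 - 0) ≤ b - 0
        rw [sub_zero, sub_self, sub_zero, max_eq_left hh.le, hKh] }
  obtain ⟨f, hf0', hf⟩ := hpl.exists_eq_forall_mem_Icc_hasDerivWithinAt₀
  have hf0 : f 0 = x₂ := hf0'
  -- f stays in the interval
  have hfb : ∀ s ∈ Set.Icc (0:ℝ) (b / K), |f s - x₂| ≤ K * s := by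
    intro s hs
    have := (convex_Icc (0:ℝ) (b / K)).norm_image_sub_le_of_norm_hasDerivWithin_le
      (f' := fun t => v t (f t)) hf (fun t _ => hvbd t (f t))
      (Set.left_mem_Icc.mpr hh.le) hs
    rw [hf0, Real.norm_eq_abs, Real.norm_eq_abs, sub_zero,
      abs_of_nonneg hs.1] at this
    exact this
  have hfmem : ∀ s ∈ Set.Icc (0:ℝ) (b / K), f s ∈ Set.Icc (x₂ - b) (x₂ + b) := by
    intro s hs
    have h1 := hfb s hs
    have h2 : K * s ≤ b := by
      calc K * s ≤ K * (b / K) := by nlinarith [hs.2]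
        _ = b := hKh
    have := abs_le.mp h1
    constructor <;> linarith [this.1, this.2]
  -- f solves the original equation
  have hfeq : ∀ s : ℝ, ∀ hs : s ∈ Set.Icc (0:ℝ) (b / K),
      v s (f s) = -(g (f s) (ψ (negPt (b / K) s hs))) := by
    intro s hs
    simp only [hv_def]
    rw [hclamp_id _ (hfmem s hs), hz_eq s hs]
  have hsol : IsSolY x₂ b (b / K) g ψ f := by
    refine ⟨hf0, fun s hs => ⟨hfmem s hs, ?_⟩⟩
    rw [← hfeq s hs]
    exact hf s hs
  -- uniqueness of the solution
  have huniq : ∀ y' : ℝ → ℝ, IsSolY x₂ b (b / K) g ψ y' →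
      ∀ s ∈ Set.Icc (0:ℝ) (b / K), y' s = f s := by
    intro y' hy'
    have key : ∀ (w : ℝ → ℝ), IsSolY x₂ b (b / K) g ψ w →
        (ContinuousOn w (Set.Icc 0 (b / K)) ∧
          ∀ t ∈ Set.Ico (0:ℝ) (b / K), HasDerivWithinAt w (v t (w t)) (Set.Ici t) t) := by
      intro w hw
      constructor
      · intro t ht
        exact ((hw.2 t ht).2).continuousWithinAt
      · intro t ht
        have ht' : t ∈ Set.Icc (0:ℝ) (b / K) := ⟨ht.1, ht.2.le⟩
        have hd := (hw.2 t ht').2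
        have hd2 : HasDerivWithinAt w (v t (w t)) (Set.Icc t (b / K)) t := by
          have : v t (w t) = -(g (w t) (ψ (negPt (b / K) t ht'))) := by
            simp only [hv_def]
            rw [hclamp_id _ (hw.2 t ht').1, hz_eq t ht']
          rw [this]
          exact hd.mono (Set.Icc_subset_Icc_left ht.1)
        rw [← Set.Ici_inter_Iic] at hd2
        exact (hasDerivWithinAt_inter (Iic_mem_nhds ht.2)).mp hd2
    obtain ⟨hc1, hd1⟩ := key y' hy'
    obtain ⟨hc2, hd2⟩ := key f hsol
    exact ODE_solution_unique_of_mem_Icc_right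
      (s := fun _ => Set.univ) (fun t _ => (hvlip t).lipschitzOnWith)
      hc1 hd1 (fun _ _ => trivial) hc2 hd2 (fun _ _ => trivial)
      (by rw [hy'.1, hf0])
  -- monotonicity bounds
  have hupper : ∀ s ∈ Set.Icc (0:ℝ) (b / K), f s ≤ x₂ - ε * s := by
    intro s hs
    have hmono : MonotoneOn (fun t => -(f t) - ε * t) (Set.Icc (0:ℝ) (b / K)) := by
      apply monotoneOn_of_hasDerivWithinAt_nonneg (convex_Icc 0 (b / K))
        (f' := fun t => -(v t (f t)) - ε)
      · intro t ht
        exact ((hf t ht).continuousWithinAt.neg.sub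
          (continuousWithinAt_const.mul continuousWithinAt_id))
      · intro t ht
        rw [interior_Icc] at ht
        have ht' : t ∈ Set.Icc (0:ℝ) (b / K) := ⟨ht.1.le, ht.2.le⟩
        have hd := (hf t ht').mono
          (Set.Ioo_subset_Icc_self : Set.Ioo (0:ℝ) (b / K) ⊆ _)
        have : HasDerivWithinAt (fun t' => -(f t') - ε * t')
            (-(v t (f t)) - ε * 1) (Set.Ioo (0:ℝ) (b / K)) t :=
          hd.neg.sub ((hasDerivWithinAt_id t _).const_mul ε)
        rw [interior_Icc]
        simpa using this
      · intro t ht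
        rw [interior_Icc] at ht
        have ht' : t ∈ Set.Icc (0:ℝ) (b / K) := ⟨ht.1.le, ht.2.le⟩
        have hg3 := hG3 (f t) (hfmem t ht') (zfun t) (hz_nonneg t)
        have : v t (f t) = -(g (f t) (zfun t)) := by
          simp only [hv_def]
          rw [hclamp_id _ (hfmem t ht')]
        rw [this]
        simp only [neg_neg]
        linarith [hg3.1]
    have := hmono (Set.left_mem_Icc.mpr hh.le) hs hs.1
    simp only [hf0, mul_zero, sub_zero] at this
    linarith
  have hlower : ∀ s ∈ Set.Icc (0:ℝ) (b / K), x₂ - K * s ≤ f s := by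
    intro s hs
    have := abs_le.mp (hfb s hs)
    linarith [this.1]
  -- strict antitonicity
  have hanti : StrictAntiOn f (Set.Icc (0:ℝ) (b / K)) := by
    apply strictAntiOn_of_hasDerivWithinAt_neg (convex_Icc 0 (b / K))
      (f' := fun t => v t (f t))
    · intro t ht
      exact (hf t ht).continuousWithinAt
    · intro t ht
      rw [interior_Icc] at ht ⊢
      exact (hf t ⟨ht.1.le, ht.2.le⟩).mono Set.Ioo_subset_Icc_self
    · intro t ht
      rw [interior_Icc] at ht
      have ht' : t ∈ Set.Icc (0:ℝ) (b / K) := ⟨ht.1.le, ht.2.le⟩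
      have hg3 := hG3 (f t) (hfmem t ht') (zfun t) (hz_nonneg t)
      have : v t (f t) = -(g (f t) (zfun t)) := by
        simp only [hv_def]
        rw [hclamp_id _ (hfmem t ht')]
      rw [this]
      linarith [hg3.1]
  -- the crossing time
  set a : ℝ := (x₂ - x₁) / K with ha_def
  set c : ℝ := (x₂ - x₁) / ε with hc_def
  have hx21 : (0:ℝ) < x₂ - x₁ := by linarith
  have ha_pos : 0 < a := div_pos hx21 hK
  have hch : c < (b / K) := by
    rw [hc_def, div_lt_iff₀ hε]
    linarith
  have hac : a ≤ c := by
    rw [ha_def, hc_def]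
    gcongr
  have haIcc : a ∈ Set.Icc (0:ℝ) (b / K) := ⟨ha_pos.le, le_trans hac hch.le⟩
  have hcIcc : c ∈ Set.Icc (0:ℝ) (b / K) := ⟨le_trans ha_pos.le hac, hch.le⟩
  have hfa : x₁ ≤ f a := by
    have := hlower a haIcc
    have hKa : K * a = x₂ - x₁ := by rw [ha_def]; field_simp
    linarith
  have hfc : f c ≤ x₁ := by
    have := hupper c hcIcc
    have hεc : ε * c = x₂ - x₁ := by rw [hc_def]; field_simp
    linarith
  have hcont_ac : ContinuousOn f (Set.Icc a c) := by
    intro t ht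
    have ht' : t ∈ Set.Icc (0:ℝ) (b / K) :=
      ⟨le_trans ha_pos.le ht.1, le_trans ht.2 hch.le⟩
    exact ((hf t ht').continuousWithinAt).mono
      (Set.Icc_subset_Icc haIcc.1 hcIcc.2)
  have hIVT : x₁ ∈ f '' Set.Icc a c := by
    apply intermediate_value_Icc' hac hcont_ac
    exact ⟨hfc, hfa⟩
  obtain ⟨τ, hτmem, hτval⟩ := hIVT
  have hτIcc0h : τ ∈ Set.Icc (0:ℝ) (b / K) :=
    ⟨le_trans ha_pos.le hτmem.1, le_trans hτmem.2 hch.le⟩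
  refine ⟨f, hsol, huniq, ha_pos, hch, τ, hτmem, hτval, ?_⟩
  intro τ' hτ' hval
  exact hanti.injOn hτ' hτIcc0h (by rw [hval, hτval])
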